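/- Let k be an integer with 0 ≤ k ≤ a + 1 such that k ≠ a − Σ_{t ∈ T} a_t + 1 for every subset T ⊆ I = I_0 ∖ {0}. Then G(q^{−k}) = 0. -/

import Mathlib

/- Vanishing of the rational function G(X) at X = q^{-k} for non-exceptional k. -/
open Finset

noncomputable section

abbrev K : Type := RatFunc ℚ

/-- the field `ℚ(q)(X)`. -/
abbrev KX : Type := RatFunc K

/-- the indeterminate `q`. -/
def q : K := RatFunc.X

/-- the indeterminate `X`. -/
def XX : KX := RatFunc.X

/-- constants `ℚ(q) → ℚ(q)(X)`. -/
def CK : K →+* KX := RatFunc.C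

/-- `(q)_k`. -/
def qfac (k : ℕ) : K := ∏ t ∈ range k, (1 - q ^ (t + 1))

/-- `σ'(T) = ∑_{t ∈ T, t ≠ 0} a_t`. -/
def sigma' (a : ℕ → ℕ) (T : Finset ℕ) : ℕ := ∑ t ∈ T.erase 0, a t

/-- `w i = a i` for `i ∉ T` and `w i = 0` for `i ∈ T`. -/
def wgt (a : ℕ → ℕ) (T : Finset ℕ) (t : ℕ) : ℕ := if t ∈ T then 0 else a t

/-- `L̃(T) = ∑_{l ∈ I₀} ∑_{i=max(l,1)}^n w_i − ∑_{l=1}^ν p_l ∑_{i=j_l}^n w_i`. -/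
def Ltil (n : ℕ) {m ν : ℕ} (i : Fin m → ℕ) (j p : Fin ν → ℕ) (a : ℕ → ℕ)
    (T : Finset ℕ) : ℤ :=
  (∑ l ∈ Finset.image i univ, ∑ t ∈ Icc (max l 1) n, (wgt a T t : ℤ))
    - ∑ k : Fin ν, (p k : ℤ) * ∑ t ∈ Icc (j k) n, (wgt a T t : ℤ)

/-- the rational function
`G(X) = (∏_{i=1}^a (1 - X q^i) / ((q)_{a₁}⋯(q)_{aₙ})) ∑_{∅≠T⊆I₀} (-1)^{|T|} q^{L̃(T)} S_T(X)`,
where `S_T(X) = (1 - X q^{σ'(T)})/(1 - q^{1+a-σ'(T)})` if `0 ∈ T`, and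
`S_T(X) = X (1 - q^{σ'(T)})/(1 - X q^{1+a-σ'(T)})` if `0 ∉ T`. -/
def G (n : ℕ) {m ν : ℕ} (i : Fin m → ℕ) (j p : Fin ν → ℕ) (a : ℕ → ℕ) : KX :=
  ((∏ t ∈ range (∑ k ∈ Icc 1 n, a k), (1 - XX * CK (q ^ (t + 1)))) /
      CK (∏ k ∈ Icc 1 n, qfac (a k))) *
    ∑ T ∈ (Finset.image i univ).powerset.filter (fun T => T.Nonempty),
      (-1 : KX) ^ T.card * CK (q ^ Ltil n i j p a T) *
        (if (0 : ℕ) ∈ T then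
          (1 - XX * CK (q ^ sigma' a T)) /
            CK (1 - q ^ ((1 + ∑ k ∈ Icc 1 n, a k : ℤ) - sigma' a T))
        else
          XX * CK (1 - q ^ sigma' a T) /
            (1 - XX * CK (q ^ ((1 + ∑ k ∈ Icc 1 n, a k : ℤ) - sigma' a T))))

/-!
For `1 ≤ k ≤ a` the prefactor `∏ (1 - X q^i)` vanishes at `X = q^{-k}`, and `k = a + 1` is the
exceptional value for `T = ∅`. The hypothesis on `k` says exactly that no denominator
`1 - X q^{1 + a - σ'(T)}` with `0 ∉ T` vanishes at `q^{-k}`, so `G` is regular there and its value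
is computed termwise. For `k = 0`, i.e. `X = 1`, the summands for `T` and `T ∪ {0}` cancel:
`σ'` ignores `0` by definition and `L̃` does because every `j_l` is positive.
-/

namespace RatFunc

open Polynomial

variable {F : Type*} [Field F] {c : F} {x y : RatFunc F} {v w : F}

/-- `x` is regular at `c` with value `v`: it has some, not necessarily reduced, representation
`p / d` with `d c ≠ 0`. -/
def HasValueAt (c : F) (x : RatFunc F) (v : F) : Prop :=
  ∃ p d : F[X], d.eval c ≠ 0 ∧
    x = algebraMap F[X] (RatFunc F) p / algebraMap F[X] (RatFunc F) d ∧ v = p.eval c / d.eval c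

namespace HasValueAt

theorem eval_eq (h : HasValueAt c x v) : x.eval (RingHom.id F) c = v := by
  obtain ⟨p, d, hd, rfl, rfl⟩ := h
  have hd0 : d ≠ 0 := by rintro rfl; simp at hd
  set x := algebraMap F[X] (RatFunc F) p / algebraMap F[X] (RatFunc F) d
  obtain ⟨e, he⟩ : x.denom ∣ d := denom_div_dvd p d
  have hxd : x.denom.eval c ≠ 0 := fun h0 => hd (by rw [he, Polynomial.eval_mul, h0, zero_mul])
  have hcross : p * x.denom = x.num * d := by
    apply algebraMap_injective F
    rw [map_mul, map_mul, ← div_eq_div_iff (algebraMap_ne_zero hd0)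
      (algebraMap_ne_zero x.denom_ne_zero), num_div_denom]
  rw [RatFunc.eval, eval₂_id, eval₂_id, div_eq_div_iff hxd hd]
  simpa using (congrArg (Polynomial.eval c) hcross).symm

theorem const (r : F) : HasValueAt c (C r) r :=
  ⟨Polynomial.C r, 1, by simp, by simp [algebraMap_C], by simp⟩

theorem X : HasValueAt c X c :=
  ⟨Polynomial.X, 1, by simp, by simp [algebraMap_X], by simp⟩

theorem zero : HasValueAt c 0 (0 : F) := by simpa using const (c := c) 0

theorem one : HasValueAt c 1 (1 : F) := by simpa using const (c := c) 1

theorem add (hx : HasValueAt c x v) (hy : HasValueAt c y w) : HasValueAt c (x + y) (v + w) := by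
  obtain ⟨p₁, d₁, hd₁, rfl, rfl⟩ := hx
  obtain ⟨p₂, d₂, hd₂, rfl, rfl⟩ := hy
  have h₁ : algebraMap F[X] (RatFunc F) d₁ ≠ 0 := algebraMap_ne_zero (by rintro rfl; simp at hd₁)
  have h₂ : algebraMap F[X] (RatFunc F) d₂ ≠ 0 := algebraMap_ne_zero (by rintro rfl; simp at hd₂)
  refine ⟨p₁ * d₂ + p₂ * d₁, d₁ * d₂, by simp [hd₁, hd₂], ?_, ?_⟩
  · rw [div_add_div _ _ h₁ h₂]; simp only [map_add, map_mul]; ring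
  · rw [div_add_div _ _ hd₁ hd₂]; simp only [Polynomial.eval_add, Polynomial.eval_mul]; ring

theorem mul (hx : HasValueAt c x v) (hy : HasValueAt c y w) : HasValueAt c (x * y) (v * w) := by
  obtain ⟨p₁, d₁, hd₁, rfl, rfl⟩ := hx
  obtain ⟨p₂, d₂, hd₂, rfl, rfl⟩ := hy
  exact ⟨p₁ * p₂, d₁ * d₂, by simp [hd₁, hd₂], by simp only [map_mul, div_mul_div_comm],
    by simp only [Polynomial.eval_mul, div_mul_div_comm]⟩

theorem neg (hx : HasValueAt c x v) : HasValueAt c (-x) (-v) := by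
  simpa using (const (c := c) (-1)).mul hx

theorem sub (hx : HasValueAt c x v) (hy : HasValueAt c y w) : HasValueAt c (x - y) (v - w) := by
  simpa [sub_eq_add_neg] using hx.add hy.neg

theorem inv (hx : HasValueAt c x v) (hv : v ≠ 0) : HasValueAt c x⁻¹ v⁻¹ := by
  obtain ⟨p, d, hd, rfl, rfl⟩ := hx
  have hp : p.eval c ≠ 0 := fun h => hv (by rw [h, zero_div])
  exact ⟨d, p, hp, by rw [inv_div], by rw [inv_div]⟩

theorem div (hx : HasValueAt c x v) (hy : HasValueAt c y w) (hw : w ≠ 0) :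
    HasValueAt c (x / y) (v / w) := by
  simpa only [div_eq_mul_inv] using hx.mul (hy.inv hw)

theorem pow (hx : HasValueAt c x v) (n : ℕ) : HasValueAt c (x ^ n) (v ^ n) := by
  induction n with
  | zero => simpa using one
  | succ n ih => simpa only [pow_succ] using ih.mul hx

theorem sum {ι : Type*} {s : Finset ι} {f : ι → RatFunc F} {g : ι → F}
    (h : ∀ t ∈ s, HasValueAt c (f t) (g t)) : HasValueAt c (∑ t ∈ s, f t) (∑ t ∈ s, g t) := by
  simpa [Prod.fst_sum, Prod.snd_sum] using Finset.sum_induction (fun t => (f t, g t))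
    (fun z : RatFunc F × F => HasValueAt c z.1 z.2) (fun _ _ => add) zero h

theorem prod {ι : Type*} {s : Finset ι} {f : ι → RatFunc F} {g : ι → F}
    (h : ∀ t ∈ s, HasValueAt c (f t) (g t)) : HasValueAt c (∏ t ∈ s, f t) (∏ t ∈ s, g t) := by
  simpa [Prod.fst_prod, Prod.snd_prod] using Finset.prod_induction (fun t => (f t, g t))
    (fun z : RatFunc F × F => HasValueAt c z.1 z.2) (fun _ _ => mul) one h

end HasValueAt

end RatFunc

open RatFunc

theorem q_ne_zero : q ≠ 0 := RatFunc.X_ne_zero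

theorem q_pow_eq_one_iff {n : ℕ} : q ^ n = 1 ↔ n = 0 := by
  refine ⟨fun h => ?_, fun h => by rw [h, pow_zero]⟩
  have := congrArg intDegree h
  rwa [q, ← algebraMap_X, ← map_pow, intDegree_polynomial, Polynomial.natDegree_X_pow,
    intDegree_one, Nat.cast_eq_zero] at this

theorem q_zpow_eq_one_iff {z : ℤ} : q ^ z = 1 ↔ z = 0 := by
  obtain ⟨n, rfl | rfl⟩ := Int.eq_nat_or_neg z <;> simp [q_pow_eq_one_iff]

theorem one_sub_q_zpow_ne_zero {z : ℤ} (hz : z ≠ 0) : 1 - q ^ z ≠ 0 :=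
  sub_ne_zero.2 (Ne.symm (mt q_zpow_eq_one_iff.1 hz))

theorem qfac_ne_zero (k : ℕ) : qfac k ≠ 0 :=
  prod_ne_zero_iff.2 fun t _ => by exact_mod_cast one_sub_q_zpow_ne_zero (z := t + 1) (by omega)

theorem prod_one_sub_q_zpow_mul_q_pow_eq_zero {k aa : ℕ} (hk : 1 ≤ k) (hka : k ≤ aa) :
    ∏ t ∈ range aa, (1 - q ^ (-(k : ℤ)) * q ^ (t + 1)) = 0 := by
  refine prod_eq_zero (i := k - 1) (mem_range.2 (by omega)) ?_
  rw [Nat.sub_add_cancel hk, ← zpow_natCast, ← zpow_add₀ q_ne_zero]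
  simp

theorem sigma'_insert_zero (a : ℕ → ℕ) {T : Finset ℕ} (h0 : 0 ∉ T) :
    sigma' a (insert 0 T) = sigma' a T := by
  rw [sigma', sigma', erase_insert h0, erase_eq_of_notMem h0]

theorem sigma'_le_sum_Icc (a : ℕ → ℕ) {n : ℕ} {T : Finset ℕ} (hT : ∀ t ∈ T, t ≤ n) :
    sigma' a T ≤ ∑ t ∈ Icc 1 n, a t :=
  sum_le_sum_of_subset fun t ht => mem_Icc.2
    ⟨Nat.one_le_iff_ne_zero.2 (ne_of_mem_erase ht), hT t (mem_of_mem_erase ht)⟩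

theorem Ltil_insert_zero (n : ℕ) {m ν : ℕ} (i : Fin m → ℕ) {j : Fin ν → ℕ} (p : Fin ν → ℕ)
    (a : ℕ → ℕ) (T : Finset ℕ) (hj0 : ∀ k, 0 < j k) :
    Ltil n i j p a (insert 0 T) = Ltil n i j p a T := by
  have hw : ∀ t, 1 ≤ t → wgt a (insert 0 T) t = wgt a T t := fun t ht => by
    simp [wgt, mem_insert, Nat.one_le_iff_ne_zero.1 ht]
  unfold Ltil
  congr 1
  · refine sum_congr rfl fun l _ => sum_congr rfl fun t ht => ?_
    rw [hw t ((le_max_right l 1).trans (mem_Icc.1 ht).1)]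
  · refine sum_congr rfl fun l _ => congrArg _ (sum_congr rfl fun t ht => ?_)
    rw [hw t ((hj0 l).trans_le (mem_Icc.1 ht).1)]

/-- The value at `X = c` of the `T`-summand of `G`, with `aa = a₁ + ⋯ + aₙ`, `L = L̃` and
`σ = σ'`. -/
def Gterm (aa : ℕ) (L : Finset ℕ → ℤ) (σ : Finset ℕ → ℕ) (c : K) (T : Finset ℕ) : K :=
  (-1) ^ T.card * q ^ L T *
    if 0 ∈ T then (1 - c * q ^ σ T) / (1 - q ^ ((1 + aa : ℤ) - σ T))
    else c * (1 - q ^ σ T) / (1 - c * q ^ ((1 + aa : ℤ) - σ T))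

section Gterm

variable {aa : ℕ} {L : Finset ℕ → ℤ} {σ : Finset ℕ → ℕ}

theorem hasValueAt_Gsummand (c : K) (T : Finset ℕ)
    (hconst : 0 ∈ T → 1 - q ^ ((1 + aa : ℤ) - σ T) ≠ 0)
    (hpole : 0 ∉ T → 1 - c * q ^ ((1 + aa : ℤ) - σ T) ≠ 0) :
    HasValueAt c ((-1 : KX) ^ T.card * CK (q ^ L T) *
      if 0 ∈ T then (1 - XX * CK (q ^ σ T)) / CK (1 - q ^ ((1 + aa : ℤ) - σ T))
      else XX * CK (1 - q ^ σ T) / (1 - XX * CK (q ^ ((1 + aa : ℤ) - σ T))))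
      (Gterm aa L σ c T) := by
  have hsign := (HasValueAt.one.neg.pow T.card).mul (HasValueAt.const (c := c) (q ^ L T))
  unfold Gterm
  split_ifs with h0
  · exact hsign.mul ((HasValueAt.one.sub (HasValueAt.X.mul (HasValueAt.const _))).div
      (HasValueAt.const _) (hconst h0))
  · exact hsign.mul ((HasValueAt.X.mul (HasValueAt.const _)).div
      (HasValueAt.one.sub (HasValueAt.X.mul (HasValueAt.const _))) (hpole h0))

theorem Gterm_empty (c : K) (hσ : σ ∅ = 0) : Gterm aa L σ c ∅ = 0 := by
  simp [Gterm, hσ]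

theorem Gterm_one_insert_zero {T : Finset ℕ} (h0 : 0 ∉ T) (hL : L (insert 0 T) = L T)
    (hσ : σ (insert 0 T) = σ T) : Gterm aa L σ 1 (insert 0 T) = -Gterm aa L σ 1 T := by
  simp only [Gterm, if_pos (mem_insert_self 0 T), if_neg h0, card_insert_of_notMem h0, hL, hσ]
  ring

end Gterm

theorem Finset.sum_powerset_eq_zero_of_insert_eq_neg {α M : Type*} [DecidableEq α]
    [AddCommGroup M] {s : Finset α} {a : α} (ha : a ∈ s) (f : Finset α → M)
    (hf : ∀ T ⊆ s.erase a, f (insert a T) = -f T) : ∑ T ∈ s.powerset, f T = 0 := by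
  rw [← insert_erase ha, sum_powerset_insert (notMem_erase a s),
    sum_congr rfl fun T hT => hf T (mem_powerset.1 hT), sum_neg_distrib, add_neg_cancel]

theorem sum_Gterm_one_eq_zero {S : Finset ℕ} (hS : 0 ∈ S) {aa : ℕ} {L : Finset ℕ → ℤ}
    {σ : Finset ℕ → ℕ} (hσ : σ ∅ = 0)
    (hL : ∀ T, 0 ∉ T → L (insert 0 T) = L T) (hσ0 : ∀ T, 0 ∉ T → σ (insert 0 T) = σ T) :
    ∑ T ∈ S.powerset.filter Finset.Nonempty, Gterm aa L σ 1 T = 0 := by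
  rw [sum_filter_of_ne fun T _ hT => nonempty_iff_ne_empty.2 fun h => hT (h ▸ Gterm_empty 1 hσ)]
  refine sum_powerset_eq_zero_of_insert_eq_neg hS _ fun T hT => ?_
  have h0 : 0 ∉ T := fun h => notMem_erase 0 S (hT h)
  exact Gterm_one_insert_zero h0 (hL T h0) (hσ0 T h0)

theorem hasValueAt_G (n : ℕ) {m ν : ℕ} (i : Fin m → ℕ) (j p : Fin ν → ℕ) (a : ℕ → ℕ) (c : K)
    (hin : ∀ k, i k ≤ n)
    (hpole : ∀ T ⊆ image i univ, 0 ∉ T →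
      1 - c * q ^ ((1 + ∑ t ∈ Icc 1 n, a t : ℤ) - sigma' a T) ≠ 0) :
    HasValueAt c (G n i j p a)
      (((∏ t ∈ range (∑ t ∈ Icc 1 n, a t), (1 - c * q ^ (t + 1))) / ∏ t ∈ Icc 1 n, qfac (a t)) *
        ∑ T ∈ (image i univ).powerset.filter Finset.Nonempty,
          Gterm (∑ t ∈ Icc 1 n, a t) (Ltil n i j p a) (sigma' a) c T) := by
  have hconst : ∀ T ⊆ image i univ,
      1 - q ^ ((1 + ∑ t ∈ Icc 1 n, a t : ℤ) - sigma' a T) ≠ 0 := fun T hT => by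
    have := sigma'_le_sum_Icc a fun t ht => by
      obtain ⟨k, -, rfl⟩ := mem_image.1 (hT ht)
      exact hin k
    exact one_sub_q_zpow_ne_zero (by omega)
  refine .mul (.div (.prod fun t _ => .sub .one (.mul .X (.const _))) (.const _)
    (prod_ne_zero_iff.2 fun t _ => qfac_ne_zero _)) (.sum fun T hT => ?_)
  have hT := mem_powerset.1 (mem_filter.1 hT).1
  exact hasValueAt_Gsummand c T (fun _ => hconst T hT) (hpole T hT)

theorem G_eval_vanishes_general (n m ν : ℕ) (i : Fin m → ℕ) (j p : Fin ν → ℕ)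
    (hm : 0 < m)
    (hi0 : i ⟨0, hm⟩ = 0) (hin : ∀ k, i k < n)
    (hj0 : ∀ k, 0 < j k)
    (a : ℕ → ℕ) (k : ℕ)
    (hk : k ≤ (∑ t ∈ Icc 1 n, a t) + 1)
    (hkT : ∀ T ⊆ (Finset.image i univ).erase 0,
      (k : ℤ) ≠ (∑ t ∈ Icc 1 n, a t : ℤ) - (∑ t ∈ T, a t) + 1) :
    RatFunc.eval (RingHom.id K) (q ^ (-(k : ℤ))) (G n i j p a) = 0 := by
  have hpole : ∀ T ⊆ image i univ, 0 ∉ T →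
      1 - q ^ (-(k : ℤ)) * q ^ ((1 + ∑ t ∈ Icc 1 n, a t : ℤ) - sigma' a T) ≠ 0 := by
    intro T hT h0
    have := hkT T (subset_erase.2 ⟨hT, h0⟩)
    rw [← zpow_add₀ q_ne_zero, sigma', erase_eq_of_notMem h0]
    exact one_sub_q_zpow_ne_zero (by push_cast at this ⊢; omega)
  rw [(hasValueAt_G n i j p a _ (fun k => (hin k).le) hpole).eval_eq]
  obtain rfl | hk1 := k.eq_zero_or_pos
  · apply mul_eq_zero_of_right
    simpa using sum_Gterm_one_eq_zero (mem_image.2 ⟨⟨0, hm⟩, mem_univ _, hi0⟩) (by simp [sigma'])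
      (fun T _ => Ltil_insert_zero n i p a T hj0) (fun T => sigma'_insert_zero a)
  · have hka : k ≤ ∑ t ∈ Icc 1 n, a t := by
      have := hkT ∅ (empty_subset _)
      rw [sum_empty] at this
      zify at hk ⊢
      push_cast at this hk ⊢
      omega
    rw [prod_one_sub_q_zpow_mul_q_pow_eq_zero hk1 hka, zero_div, zero_mul]

/-- If `0 ≤ k ≤ a + 1` and `k ≠ a - σ(T) + 1` for every subset
`T ⊆ I = I₀ \ {0}`, then `G(q^{-k}) = 0`. -/
theorem G_eval_vanishes (n m ν : ℕ) (i : Fin m → ℕ) (j p : Fin ν → ℕ)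
    (hm : 0 < m)
    (hi_mono : StrictMono i) (hi0 : i ⟨0, hm⟩ = 0) (hin : ∀ k, i k < n)
    (hj_mono : StrictMono j) (hj0 : ∀ k, 0 < j k) (hjn : ∀ k, j k ≤ n)
    (hij : ∀ k l, i k ≠ j l)
    (hp : ∀ k, 0 < p k) (hpm : ∑ k, p k = m)
    (a : ℕ → ℕ) (k : ℕ)
    (hk : k ≤ (∑ t ∈ Icc 1 n, a t) + 1)
    (hkT : ∀ T ⊆ (Finset.image i univ).erase 0,
      (k : ℤ) ≠ (∑ t ∈ Icc 1 n, a t : ℤ) - (∑ t ∈ T, a t) + 1) :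
    RatFunc.eval (RingHom.id K) (q ^ (-(k : ℤ))) (G n i j p a) = 0 :=
  G_eval_vanishes_general n m ν i j p hm hi0 hin hj0 a k hk hkT

end
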